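/- If g : [0,∞) → ℝ is positive and decreasing with r ↦ r^{d-1} g(r) integrable on (0,∞), then for every ζ ∈ [−1/2, 1/2]^d and every c > 0, the sum over r ∈ ℤ^d of g(c‖ζ + r‖₂) is at least (2^d / (d^{d/2−1} 3^{d−1} c^d)) times the integral from 3d^{1/2}c/2 to ∞ of r^{d−1} g(r) dr. -/

import Mathlib

/-!
Group the points of `ℤ^d` into the sup-norm shells `S m = {k : ‖k‖_∞ = m + 1}`. The shell `S m`
has `(2m+3)^d - (2m+1)^d ≥ d 2^d (m+1)^(d-1)` points, and for `k ∈ S m` we have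
`m + 1/2 ≤ ‖ζ + k‖₂ ≤ √d (m + 3/2)`, so each term of the lattice sum over `S m` is at least
`g (c √d (m + 3/2))`. With `h = c √d`, the integral of `r^(d-1) g r` over
`[h (m + 3/2), h (m + 5/2)]` is at most `h^d 3^(d-1) (m+1)^(d-1) g (h (m + 3/2))`, and these
intervals tile `(3h/2, ∞)`; summing over `m` gives the bound. Summability of the lattice sum
comes from the same comparison in the opposite direction, using
`#S m ≤ 2d 3^(d-1) (m+1)^(d-1)`.
-/

open MeasureTheory Set Finset Filter Topology

theorem two_mul_mul_pow_le_add_one_pow_sub_sub_one_pow {R : Type*} [CommRing R] [LinearOrder R]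
    [IsStrictOrderedRing R] {x : R} (hx : 0 ≤ x) (n : ℕ) :
    2 * (n + 1) * x ^ n ≤ (x + 1) ^ (n + 1) - (x - 1) ^ (n + 1) := by
  have hterm (j : ℕ) : 0 ≤ x ^ j * 1 ^ (n + 1 - j) * (n + 1).choose j
      - x ^ j * (-1) ^ (n + 1 - j) * (n + 1).choose j := by
    have hneg : (-1 : R) ^ (n + 1 - j) ≤ 1 := by
      rcases neg_one_pow_eq_or R (n + 1 - j) with h | h <;> rw [h]; norm_num
    have hxc : 0 ≤ x ^ j * (n + 1).choose j := by positivity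
    calc (0 : R) ≤ x ^ j * (n + 1).choose j * (1 - (-1) ^ (n + 1 - j)) :=
          mul_nonneg hxc (sub_nonneg.2 hneg)
      _ = _ := by ring
  rw [sub_eq_add_neg x, add_pow, add_pow, ← sum_sub_distrib]
  refine le_of_eq_of_le ?_
    (single_le_sum (fun j _ => hterm j) (mem_range.2 (by omega : n < n + 2)))
  rw [Nat.add_sub_cancel_left, Nat.choose_succ_self_right]
  push_cast
  ring

section LatticeCube

variable {ι : Type*} [Fintype ι] [DecidableEq ι]

variable (ι) in
noncomputable def latticeCube (m : ℕ) : Finset (ι → ℤ) :=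
  Fintype.piFinset fun _ => Icc (-m : ℤ) m

theorem mem_latticeCube {m : ℕ} {k : ι → ℤ} : k ∈ latticeCube ι m ↔ ∀ i, |k i| ≤ m := by
  simp [latticeCube, abs_le]

theorem latticeCube_mono : Monotone (latticeCube ι) := fun _ _ h _ hk =>
  mem_latticeCube.2 fun i => (mem_latticeCube.1 hk i).trans (by exact_mod_cast h)

theorem exists_subset_latticeCube (u : Finset (ι → ℤ)) : ∃ M, u ⊆ latticeCube ι M := by
  have hcover (k : ι → ℤ) : ∃ M, k ∈ latticeCube ι M :=
    ⟨∑ i, (k i).natAbs, mem_latticeCube.2 fun i => by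
      rw [Int.abs_eq_natAbs]
      exact_mod_cast single_le_sum (fun j _ => Nat.zero_le (k j).natAbs) (mem_univ i)⟩
  exact ((tendsto_atTop_finset_of_monotone latticeCube_mono hcover).eventually_ge_atTop u).exists

theorem card_latticeCube (m : ℕ) : #(latticeCube ι m) = (2 * m + 1) ^ Fintype.card ι := by
  simp only [latticeCube, Fintype.card_piFinset, Int.card_Icc, prod_const, card_univ]
  congr 1
  omega

theorem exists_le_abs_of_mem_sdiff_latticeCube {m : ℕ} {k : ι → ℤ}
    (hk : k ∈ latticeCube ι (m + 1) \ latticeCube ι m) : ∃ i, (m : ℤ) + 1 ≤ |k i| := by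
  have := (mem_sdiff.1 hk).2
  simp only [mem_latticeCube, not_forall, not_le] at this
  simpa only [Int.add_one_le_iff] using this

theorem cast_card_sdiff_latticeCube (m : ℕ) :
    (#(latticeCube ι (m + 1) \ latticeCube ι m) : ℝ)
      = (2 * m + 3) ^ Fintype.card ι - (2 * m + 1) ^ Fintype.card ι := by
  rw [card_sdiff_of_subset (latticeCube_mono m.le_succ),
    Nat.cast_sub (Finset.card_le_card (latticeCube_mono m.le_succ)), card_latticeCube,
    card_latticeCube]
  push_cast
  ring

theorem le_card_sdiff_latticeCube (m : ℕ) :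
    Fintype.card ι * 2 ^ Fintype.card ι * ((m : ℝ) + 1) ^ (Fintype.card ι - 1)
      ≤ #(latticeCube ι (m + 1) \ latticeCube ι m) := by
  rw [cast_card_sdiff_latticeCube]
  obtain _ | n := Fintype.card ι
  · simp
  have h := two_mul_mul_pow_le_add_one_pow_sub_sub_one_pow
    (by positivity : (0 : ℝ) ≤ 2 * (m + 1)) n
  rw [mul_pow, show (2 * ((m : ℝ) + 1) + 1) = 2 * m + 3 by ring,
    show (2 * ((m : ℝ) + 1) - 1) = 2 * m + 1 by ring] at h
  rw [Nat.add_sub_cancel]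
  push_cast
  calc _ = 2 * ((n : ℝ) + 1) * (2 ^ n * (m + 1) ^ n) := by ring
    _ ≤ _ := h

theorem card_sdiff_latticeCube_le (m : ℕ) :
    (#(latticeCube ι (m + 1) \ latticeCube ι m) : ℝ)
      ≤ 2 * Fintype.card ι * 3 ^ (Fintype.card ι - 1)
          * ((m : ℝ) + 1) ^ (Fintype.card ι - 1) := by
  have h := abs_pow_sub_pow_le (2 * m + 3 : ℝ) (2 * m + 1) (Fintype.card ι)
  rw [cast_card_sdiff_latticeCube]
  refine (le_abs_self _).trans (h.trans ?_)
  rw [show (2 * m + 3 : ℝ) - (2 * m + 1) = 2 by ring, abs_two,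
    max_eq_left (abs_le_abs_of_nonneg (by positivity) (by linarith)),
    abs_of_nonneg (by positivity), mul_assoc _ (3 ^ _ : ℝ), ← mul_pow]
  gcongr
  linarith

end LatticeCube

section EuclideanNorm

variable {ι : Type*} [Fintype ι]

theorem abs_le_sqrt_sum_sq (x : ι → ℝ) (i : ι) : |x i| ≤ √(∑ j, x j ^ 2) :=
  Real.abs_le_sqrt (single_le_sum (fun j _ => sq_nonneg (x j)) (mem_univ i))

theorem sqrt_sum_sq_le {x : ι → ℝ} {B : ℝ} (hB : 0 ≤ B) (hx : ∀ i, |x i| ≤ B) :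
    √(∑ i, x i ^ 2) ≤ √(Fintype.card ι) * B := by
  have hsum : ∑ i, x i ^ 2 ≤ Fintype.card ι * B ^ 2 := by
    simpa using sum_le_sum fun i (_ : i ∈ Finset.univ) =>
      sq_le_sq' (abs_le.1 (hx i)).1 (abs_le.1 (hx i)).2
  calc √(∑ i, x i ^ 2) ≤ √(Fintype.card ι * B ^ 2) := Real.sqrt_le_sqrt hsum
    _ = √(Fintype.card ι) * B := by rw [Real.sqrt_mul (Nat.cast_nonneg _), Real.sqrt_sq hB]

end EuclideanNorm

theorem intervalIntegrable_of_integrableOn_Ioi {F : ℝ → ℝ} {a x y : ℝ}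
    (hF : IntegrableOn F (Ioi a)) (hx : a < x) (hy : a < y) : IntervalIntegrable F volume x y :=
  (hF.mono_set fun _ hr => (lt_min hx hy).trans_le hr.1).intervalIntegrable

theorem tendsto_sum_intervalIntegral_integral_Ioi {F : ℝ → ℝ} {a h : ℝ}
    (hF : IntegrableOn F (Ioi a)) (hh : 0 < h) :
    Tendsto (fun M : ℕ => ∑ j ∈ range M, ∫ x in a + j * h..a + (j + 1) * h, F x) atTop
      (𝓝 (∫ x in Ioi a, F x)) := by
  have hpiece (j : ℕ) : IntervalIntegrable F volume (a + j * h) (a + (j + 1 : ℕ) * h) := by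
    rw [intervalIntegrable_iff_integrableOn_Ioc_of_le (by push_cast; nlinarith)]
    exact hF.mono_set fun x hx => (le_add_of_nonneg_right (by positivity)).trans_lt hx.1
  have hsum (M : ℕ) : ∑ j ∈ range M, ∫ x in a + j * h..a + (j + 1) * h, F x
      = ∫ x in a..a + M * h, F x := by
    have := intervalIntegral.sum_integral_adjacent_intervals (a := fun j : ℕ => a + j * h)
      (n := M) fun j _ => hpiece j
    simpa using this
  simp_rw [hsum]
  exact intervalIntegral_tendsto_integral_Ioi a hF
    (tendsto_atTop_add_const_left _ _ (tendsto_natCast_atTop_atTop.atTop_mul_const hh))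

theorem sum_intervalIntegral_le_integral_Ioi {F : ℝ → ℝ} {a h : ℝ}
    (hF : IntegrableOn F (Ioi a)) (hh : 0 < h) (hF0 : ∀ x, a ≤ x → 0 ≤ F x) (M : ℕ) :
    ∑ j ∈ range M, ∫ x in a + j * h..a + (j + 1) * h, F x ≤ ∫ x in Ioi a, F x := by
  refine Monotone.ge_of_tendsto (monotone_nat_of_le_succ fun M => ?_)
    (tendsto_sum_intervalIntegral_integral_Ioi hF hh) M
  rw [sum_range_succ, le_add_iff_nonneg_right]
  exact intervalIntegral.integral_nonneg (by nlinarith) fun x hx => hF0 x (by nlinarith [hx.1])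

section AntitoneWeight

variable {g : ℝ → ℝ} {p : ℕ} {x y : ℝ}

theorem intervalIntegral_pow_mul_le (hg : AntitoneOn g (Ici 0)) (hg0 : ∀ r, 0 ≤ r → 0 ≤ g r)
    (hx : 0 ≤ x) (hxy : x ≤ y) (hint : IntervalIntegrable (fun r => r ^ p * g r) volume x y) :
    ∫ r in x..y, r ^ p * g r ≤ (y - x) * (y ^ p * g x) := by
  rw [← smul_eq_mul, ← intervalIntegral.integral_const]
  refine intervalIntegral.integral_mono_on hxy hint intervalIntegrable_const fun r hr => ?_
  have hr0 : 0 ≤ r := hx.trans hr.1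
  exact mul_le_mul (pow_le_pow_left₀ hr0 hr.2 p) (hg hx hr0 hr.1) (hg0 r hr0)
    (pow_nonneg (hx.trans hxy) p)

theorem le_intervalIntegral_pow_mul (hg : AntitoneOn g (Ici 0)) (hg0 : ∀ r, 0 ≤ r → 0 ≤ g r)
    (hx : 0 ≤ x) (hxy : x ≤ y) (hint : IntervalIntegrable (fun r => r ^ p * g r) volume x y) :
    (y - x) * (x ^ p * g y) ≤ ∫ r in x..y, r ^ p * g r := by
  rw [← smul_eq_mul, ← intervalIntegral.integral_const]
  refine intervalIntegral.integral_mono_on hxy intervalIntegrable_const hint fun r hr => ?_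
  have hr0 : 0 ≤ r := hx.trans hr.1
  exact mul_le_mul (pow_le_pow_left₀ hx hr.1 p) (hg hr0 (hx.trans hxy) hr.2)
    (hg0 y (hx.trans hxy)) (pow_nonneg hr0 p)

end AntitoneWeight

section LatticeSum

variable {ι : Type*} [Fintype ι] [DecidableEq ι] {g : ℝ → ℝ} {ζ : ι → ℝ} {c : ℝ}

theorem le_sqrt_sum_sq_of_mem_sdiff_latticeCube (hζ : ∀ i, |ζ i| ≤ 1 / 2) {m : ℕ}
    {k : ι → ℤ} (hk : k ∈ latticeCube ι (m + 1) \ latticeCube ι m) :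
    m + 1 / 2 ≤ √(∑ i, (ζ i + k i) ^ 2) := by
  obtain ⟨i, hi⟩ := exists_le_abs_of_mem_sdiff_latticeCube hk
  have hi' : (m : ℝ) + 1 ≤ |(k i : ℝ)| := by exact_mod_cast hi
  have hsub : |(k i : ℝ)| ≤ |ζ i + k i| + |ζ i| := by
    simpa using abs_sub (ζ i + k i) (ζ i)
  linarith [abs_le_sqrt_sum_sq (fun i => ζ i + k i) i, hζ i]

theorem sqrt_sum_sq_le_of_mem_latticeCube (hζ : ∀ i, |ζ i| ≤ 1 / 2) {m : ℕ} {k : ι → ℤ}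
    (hk : k ∈ latticeCube ι m) :
    √(∑ i, (ζ i + k i) ^ 2) ≤ √(Fintype.card ι) * (m + 1 / 2) := by
  refine sqrt_sum_sq_le (by positivity) fun i => (abs_add_le _ _).trans ?_
  have : |(k i : ℝ)| ≤ m := by exact_mod_cast mem_latticeCube.1 hk i
  linarith [hζ i]

theorem sum_sdiff_latticeCube_le (hg : AntitoneOn g (Ici 0)) (hg0 : ∀ r, 0 ≤ r → 0 ≤ g r)
    (hζ : ∀ i, |ζ i| ≤ 1 / 2) (hc : 0 ≤ c) (m : ℕ) :
    ∑ k ∈ latticeCube ι (m + 1) \ latticeCube ι m, g (c * √(∑ i, (ζ i + k i) ^ 2))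
      ≤ 2 * Fintype.card ι * 3 ^ (Fintype.card ι - 1) * ((m : ℝ) + 1) ^ (Fintype.card ι - 1)
          * g (c * (m + 1 / 2)) := by
  calc _ ≤ #(latticeCube ι (m + 1) \ latticeCube ι m) • g (c * (m + 1 / 2)) :=
        sum_le_card_nsmul _ _ _ fun k hk =>
          hg (mem_Ici.2 (by positivity)) (mem_Ici.2 (by positivity))
            (mul_le_mul_of_nonneg_left (le_sqrt_sum_sq_of_mem_sdiff_latticeCube hζ hk) hc)
    _ ≤ _ := by
        rw [nsmul_eq_mul]
        gcongr
        · exact hg0 _ (by positivity)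
        · exact card_sdiff_latticeCube_le m

theorem le_sum_sdiff_latticeCube (hg : AntitoneOn g (Ici 0)) (hg0 : ∀ r, 0 ≤ r → 0 ≤ g r)
    (hζ : ∀ i, |ζ i| ≤ 1 / 2) (hc : 0 ≤ c) (m : ℕ) :
    Fintype.card ι * 2 ^ Fintype.card ι * ((m : ℝ) + 1) ^ (Fintype.card ι - 1)
        * g (c * √(Fintype.card ι) * (m + 3 / 2))
      ≤ ∑ k ∈ latticeCube ι (m + 1) \ latticeCube ι m, g (c * √(∑ i, (ζ i + k i) ^ 2)) := by
  calc _ ≤ #(latticeCube ι (m + 1) \ latticeCube ι m)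
          • g (c * √(Fintype.card ι) * (m + 3 / 2)) := by
        rw [nsmul_eq_mul]
        gcongr
        · exact hg0 _ (by positivity)
        · exact le_card_sdiff_latticeCube m
    _ ≤ _ := card_nsmul_le_sum _ _ _ fun k hk => by
        have hnorm := sqrt_sum_sq_le_of_mem_latticeCube hζ (mem_sdiff.1 hk).1
        push_cast at hnorm
        refine hg (mem_Ici.2 (by positivity)) (mem_Ici.2 (by positivity)) ?_
        rw [mul_assoc]
        gcongr
        linarith

theorem summable_lattice_comp_norm (hg : AntitoneOn g (Ici 0)) (hg0 : ∀ r, 0 ≤ r → 0 ≤ g r)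
    (hint : IntegrableOn (fun r => r ^ (Fintype.card ι - 1) * g r) (Ioi 0))
    (hζ : ∀ i, |ζ i| ≤ 1 / 2) (hc : 0 < c) :
    Summable fun k : ι → ℤ => g (c * √(∑ i, (ζ i + k i) ^ 2)) := by
  set p := Fintype.card ι - 1
  set K : ℝ := 2 * Fintype.card ι * 3 ^ p * (4 / c) ^ (p + 1) with hK
  have hf0 (k : ι → ℤ) : 0 ≤ g (c * √(∑ i, (ζ i + k i) ^ 2)) := hg0 _ (by positivity)
  -- The pieces `[c (m+1)/4, c (m+2)/4]` end below `c (m + 1/2)` and start at a multiple of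
  -- `m + 1`, so shell `m` is controlled by piece `m` without an index shift.
  have hshell (m : ℕ) :
      ∑ k ∈ latticeCube ι (m + 1) \ latticeCube ι m, g (c * √(∑ i, (ζ i + k i) ^ 2))
        ≤ K * ∫ r in c / 4 + m * (c / 4)..c / 4 + (m + 1) * (c / 4), r ^ p * g r := by
    have hpiece := le_intervalIntegral_pow_mul (p := p) hg hg0 (by positivity)
      (by nlinarith : c / 4 + m * (c / 4) ≤ c / 4 + (m + 1) * (c / 4))
      (intervalIntegrable_of_integrableOn_Ioi hint (by positivity) (by positivity))
    have hgm : g (c * (m + 1 / 2)) ≤ g (c / 4 + (m + 1) * (c / 4)) :=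
      hg (mem_Ici.2 (by positivity)) (mem_Ici.2 (by positivity)) (by nlinarith)
    calc _ ≤ 2 * Fintype.card ι * 3 ^ p * ((m : ℝ) + 1) ^ p * g (c * (m + 1 / 2)) :=
          sum_sdiff_latticeCube_le hg hg0 hζ hc.le m
      _ ≤ 2 * Fintype.card ι * 3 ^ p * ((m : ℝ) + 1) ^ p * g (c / 4 + (m + 1) * (c / 4)) := by
          gcongr
      _ = K * ((c / 4 + (m + 1) * (c / 4) - (c / 4 + m * (c / 4)))
            * ((c / 4 + m * (c / 4)) ^ p * g (c / 4 + (m + 1) * (c / 4)))) := by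
          have hcancel : (4 / c) ^ (p + 1) * (c / 4) ^ (p + 1) = 1 := by
            rw [← mul_pow, div_mul_div_comm, mul_comm 4 c, div_self (by positivity), one_pow]
          rw [hK, show c / 4 + m * (c / 4) = c / 4 * (m + 1) by ring, mul_pow]
          linear_combination (-(2 * Fintype.card ι * 3 ^ p * ((m : ℝ) + 1) ^ p
            * g (c / 4 + (m + 1) * (c / 4)))) * hcancel
      _ ≤ _ := by gcongr
  have hintegral := sum_intervalIntegral_le_integral_Ioi
    (hint.mono_set (Ioi_subset_Ioi (by positivity : (0 : ℝ) ≤ c / 4))) (by positivity : 0 < c / 4)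
    (fun r hr => mul_nonneg (pow_nonneg (by linarith) p) (hg0 r (by linarith)))
  refine summable_of_sum_le hf0 (c := ∑ k ∈ latticeCube ι 0, g (c * √(∑ i, (ζ i + k i) ^ 2))
    + K * ∫ r in Ioi (c / 4), r ^ p * g r) fun u => ?_
  obtain ⟨M, hM⟩ := exists_subset_latticeCube u
  calc _ ≤ ∑ k ∈ latticeCube ι M, g (c * √(∑ i, (ζ i + k i) ^ 2)) :=
        sum_le_sum_of_subset_of_nonneg hM fun k _ _ => hf0 k
    _ = _ := sum_eq_sum_range_sdiff _ latticeCube_mono _ _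
    _ ≤ _ := by
        gcongr
        refine (sum_le_sum fun m _ => hshell m).trans ?_
        rw [← mul_sum]
        gcongr
        exact hintegral M

theorem integral_Ioi_le_tsum_lattice_comp_norm [Nonempty ι] (hg : AntitoneOn g (Ici 0))
    (hg0 : ∀ r, 0 ≤ r → 0 ≤ g r)
    (hint : IntegrableOn (fun r => r ^ (Fintype.card ι - 1) * g r) (Ioi 0))
    (hζ : ∀ i, |ζ i| ≤ 1 / 2) (hc : 0 < c) :
    ∫ r in Ioi (3 * √(Fintype.card ι) * c / 2), r ^ (Fintype.card ι - 1) * g r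
      ≤ (c * √(Fintype.card ι)) ^ Fintype.card ι * 3 ^ (Fintype.card ι - 1)
          / (Fintype.card ι * 2 ^ Fintype.card ι)
          * ∑' k : ι → ℤ, g (c * √(∑ i, (ζ i + k i) ^ 2)) := by
  set d := Fintype.card ι
  set p := d - 1
  have hp : p + 1 = d := Nat.sub_add_cancel Fintype.card_pos
  have hd : (0 : ℝ) < d := by exact_mod_cast Fintype.card_pos
  set h := c * √d with hh
  have hh0 : 0 < h := by positivity
  set a := 3 * √d * c / 2
  have ha : a = 3 / 2 * h := by ring
  set K := h ^ d * 3 ^ p / (d * 2 ^ d) with hK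
  have hf0 (k : ι → ℤ) : 0 ≤ g (c * √(∑ i, (ζ i + k i) ^ 2)) := hg0 _ (by positivity)
  have hpiece (j : ℕ) : ∫ r in a + j * h..a + (j + 1) * h, r ^ p * g r
      ≤ K * ∑ k ∈ latticeCube ι (j + 1) \ latticeCube ι j, g (c * √(∑ i, (ζ i + k i) ^ 2)) := by
    have hupper := intervalIntegral_pow_mul_le (p := p) hg hg0 (by positivity)
      (by nlinarith : a + j * h ≤ a + (j + 1) * h)
      (intervalIntegrable_of_integrableOn_Ioi hint (by positivity) (by positivity))
    calc _ ≤ _ := hupper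
      _ ≤ h * ((3 * h * (j + 1)) ^ p * g (c * √d * (j + 3 / 2))) := by
          rw [show a + (j + 1) * h - (a + j * h) = h by ring,
            show a + j * h = c * √d * (j + 3 / 2) by rw [ha, hh]; ring]
          gcongr
          · exact hg0 _ (by positivity)
          · nlinarith
      _ = K * (d * 2 ^ d * ((j : ℝ) + 1) ^ p * g (c * √d * (j + 3 / 2))) := by
          rw [hK, show h ^ d = h ^ p * h by rw [← hp, pow_succ], mul_pow, mul_pow]
          field_simp
      _ ≤ _ := by
          gcongr
          exact le_sum_sdiff_latticeCube hg hg0 hζ hc.le j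
  have hsum (M : ℕ) : ∑ j ∈ range M, ∫ r in a + j * h..a + (j + 1) * h, r ^ p * g r
      ≤ K * ∑' k : ι → ℤ, g (c * √(∑ i, (ζ i + k i) ^ 2)) := by
    calc _ ≤ ∑ j ∈ range M, K * ∑ k ∈ latticeCube ι (j + 1) \ latticeCube ι j,
          g (c * √(∑ i, (ζ i + k i) ^ 2)) := sum_le_sum fun j _ => hpiece j
      _ ≤ K * ∑ k ∈ latticeCube ι M, g (c * √(∑ i, (ζ i + k i) ^ 2)) := by
          rw [← mul_sum, sum_eq_sum_range_sdiff _ latticeCube_mono _ M]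
          gcongr
          exact le_add_of_nonneg_left (sum_nonneg fun k _ => hf0 k)
      _ ≤ _ := by
          gcongr
          exact (summable_lattice_comp_norm hg hg0 hint hζ hc).sum_le_tsum _ fun k _ => hf0 k
  exact le_of_tendsto' (tendsto_sum_intervalIntegral_integral_Ioi
    (hint.mono_set (Ioi_subset_Ioi (by positivity))) hh0) hsum

end LatticeSum

theorem stmt4 (d : ℕ) (hd : 1 ≤ d) (g : ℝ → ℝ)
    (hpos : ∀ r : ℝ, 0 ≤ r → 0 < g r)
    (hdec : ∀ r s : ℝ, 0 ≤ r → r ≤ s → g s ≤ g r)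
    (hint : IntegrableOn (fun r : ℝ => r ^ (d - 1) * g r) (Set.Ioi 0))
    (ζ : Fin d → ℝ) (hζ : ∀ i, ζ i ∈ Set.Icc (-(1 / 2) : ℝ) (1 / 2))
    (c : ℝ) (hc : 0 < c) :
    (2 ^ d / ((d : ℝ) ^ ((d : ℝ) / 2 - 1) * 3 ^ (d - 1) * c ^ d)) *
        ∫ r in Set.Ioi (3 * Real.sqrt d * c / 2), r ^ (d - 1) * g r
      ≤ ∑' k : Fin d → ℤ, g (c * Real.sqrt (∑ i, (ζ i + (k i : ℝ)) ^ 2)) := by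
  have : Nonempty (Fin d) := ⟨⟨0, hd⟩⟩
  have hbound := integral_Ioi_le_tsum_lattice_comp_norm (fun r hr s _ hrs => hdec r s hr hrs)
    (fun r hr => (hpos r hr).le) (by simpa using hint) (fun i => abs_le.2 (hζ i)) hc
  simp only [Fintype.card_fin] at hbound
  have hd0 : (0 : ℝ) < d := by exact_mod_cast hd
  have hconst : 2 ^ d / ((d : ℝ) ^ ((d : ℝ) / 2 - 1) * 3 ^ (d - 1) * c ^ d)
      * ((c * √d) ^ d * 3 ^ (d - 1) / (d * 2 ^ d)) = 1 := by
    have hsqrt : √(d : ℝ) ^ d = (d : ℝ) ^ ((d : ℝ) / 2) := by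
      rw [Real.sqrt_eq_rpow, ← Real.rpow_natCast, ← Real.rpow_mul hd0.le, one_div_mul_eq_div]
    rw [Real.rpow_sub_one hd0.ne', mul_pow, hsqrt]
    field_simp
  have hscaled := mul_le_mul_of_nonneg_left hbound
    (by positivity : (0 : ℝ) ≤ 2 ^ d / ((d : ℝ) ^ ((d : ℝ) / 2 - 1) * 3 ^ (d - 1) * c ^ d))
  rwa [← mul_assoc, hconst, one_mul] at hscaled
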